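/- arXiv:2004.12093 — 2 statements merged into one kernel-verified Lean document; each statement's English description precedes it below -/
import Mathlib

section
/- Let m, n be positive integers, let w ∈ B_{m,n}, and let j be such that the cyclic rotation rot^j(w) begins with the letter 0. Then rot^j(w) ∈ B_{m,n}. (In particular, the lexicographically smallest cyclic rotation of w belongs to B_{m,n}.) -/
/-- The `j`-th cyclic rotation of a word `w` of length `k`:
`(rot j w)ᵢ = w_{i+j mod k}` (0-indexed), so `rot 1` sends `w₁w₂⋯w_k` to `w₂⋯w_k w₁`. -/
def rot {k : ℕ} (j : ℕ) (w : Fin k → Bool) : Fin k → Bool :=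
  fun i => w ⟨((i : ℕ) + j) % k, Nat.mod_lt _ i.pos⟩

/-- Membership in `B_{m,n}`: a 0/1 word of length `(m+1)n` which is `m`-balanced
(exactly `mn` ones and `n` zeros), starts with a zero, and has weight `≡ -1 (mod n)`. -/
def memB (m n : ℕ) (w : Fin ((m + 1) * n) → Bool) : Prop :=
  (Finset.univ.filter fun i => w i = true).card = m * n ∧
  (Finset.univ.filter fun i => w i = false).card = n ∧
  (∀ i : Fin ((m + 1) * n), (i : ℕ) = 0 → w i = false) ∧
  (((∑ i : Fin ((m + 1) * n), if w i = true then (i : ℕ) + 1 else 0 : ℕ) : ZMod n) = -1)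

/-! Rotating `w` by `j` moves every letter `j` places to the left (cyclically), so the letter
counts are unchanged. When `n ∣ k`, positions modulo `n` are all shifted by `-j`, so the
weight modulo `n` drops by `j` times the number of ones; for an `m`-balanced word of length
`(m+1)n` that number is `mn ≡ 0 (mod n)`. -/

open Finset

namespace Rotation

variable {k : ℕ}

def weight (w : Fin k → Bool) : ℕ :=
  ∑ i, if w i = true then (i : ℕ) + 1 else 0

def rotIndex (k j : ℕ) (i : Fin k) : Fin k :=
  ⟨((i : ℕ) + j) % k, Nat.mod_lt _ i.pos⟩

theorem rotIndex_injective (j : ℕ) : Function.Injective (rotIndex k j) := by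
  intro a b hab
  have hmod : (a : ℕ) + j ≡ b + j [MOD k] := congrArg Fin.val hab
  ext
  simpa [Nat.ModEq, Nat.mod_eq_of_lt a.isLt, Nat.mod_eq_of_lt b.isLt] using
    hmod.add_right_cancel' j

noncomputable def rotEquiv (k j : ℕ) : Fin k ≃ Fin k :=
  Equiv.ofBijective _ (rotIndex_injective (k := k) j).bijective_of_finite

theorem rot_apply (j : ℕ) (w : Fin k → Bool) (i : Fin k) : rot j w i = w (rotEquiv k j i) :=
  rfl

theorem card_filter_rot (j : ℕ) (w : Fin k → Bool) (b : Bool) :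
    #{i | rot j w i = b} = #{i | w i = b} :=
  card_equiv (rotEquiv k j) fun i => by rw [mem_filter_univ, mem_filter_univ, rot_apply]

theorem natCast_rotIndex {n : ℕ} (hnk : n ∣ k) (j : ℕ) (i : Fin k) :
    ((rotIndex k j i : ℕ) : ZMod n) = i + j := by
  rw [rotIndex, ← ZMod.natCast_mod, Nat.mod_mod_of_dvd _ hnk, ZMod.natCast_mod]
  push_cast
  rfl

theorem natCast_weight_eq_weight_rot_add {n : ℕ} (hnk : n ∣ k) (j : ℕ) (w : Fin k → Bool) :
    (weight w : ZMod n) = weight (rot j w) + j * #{i | rot j w i = true} := by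
  have hshift : ∀ i, (if rot j w i = true then ((rotEquiv k j i : ℕ) : ZMod n) + 1 else 0) =
      (if rot j w i = true then ((i : ℕ) : ZMod n) + 1 else 0) +
        if rot j w i = true then (j : ZMod n) else 0 := by
    intro i
    rw [ite_add_ite, add_zero, rotEquiv, Equiv.ofBijective_apply, natCast_rotIndex hnk]
    ring_nf
  calc (weight w : ZMod n)
      = ∑ i, if rot j w i = true then ((rotEquiv k j i : ℕ) : ZMod n) + 1 else 0 := by
        rw [weight]
        push_cast
        exact (Equiv.sum_comp (rotEquiv k j) _).symm
    _ = weight (rot j w) + ∑ i, if rot j w i = true then (j : ZMod n) else 0 := by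
        rw [sum_congr rfl fun i _ => hshift i, sum_add_distrib, weight]
        push_cast
        rfl
    _ = weight (rot j w) + j * #{i | rot j w i = true} := by
        rw [← sum_filter, sum_const, nsmul_eq_mul, mul_comm]

end Rotation

open Rotation in
theorem rot_mem_B_general (m n : ℕ)
    (w : Fin ((m + 1) * n) → Bool) (hw : memB m n w) (j : ℕ)
    (h0 : ∀ i : Fin ((m + 1) * n), (i : ℕ) = 0 → rot j w i = false) :
    memB m n (rot j w) := by
  obtain ⟨hones, hzeros, -, hweight⟩ := hw
  have hones_rot : #{i | rot j w i = true} = m * n := (card_filter_rot j w true).trans hones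
  refine ⟨hones_rot, (card_filter_rot j w false).trans hzeros, h0, ?_⟩
  have key := natCast_weight_eq_weight_rot_add (n := n) (dvd_mul_left n (m + 1)) j w
  rw [hones_rot, Nat.cast_mul, ZMod.natCast_self, mul_zero, mul_zero, add_zero] at key
  exact key ▸ hweight

/-- If `w ∈ B_{m,n}` and the cyclic rotation `rotʲ(w)` begins with the letter `0`,
then `rotʲ(w) ∈ B_{m,n}`. -/
theorem rot_mem_B (m n : ℕ) (hm : 0 < m) (hn : 0 < n)
    (w : Fin ((m + 1) * n) → Bool) (hw : memB m n w) (j : ℕ)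
    (h0 : ∀ i : Fin ((m + 1) * n), (i : ℕ) = 0 → rot j w i = false) :
    memB m n (rot j w) :=
  rot_mem_B_general m n w hw j h0
end

section
/- Let m, n be positive integers and let B^L_{m,n} denote the set of Lyndon words in B_{m,n}. Then n · |B^L_{m,n}| = |B_{m,n}|. -/
/-- Strict lexicographic order on 0/1 words (with `false < true`). -/
def lexLt {k : ℕ} (v w : Fin k → Bool) : Prop :=
  ∃ i : Fin k, (∀ i' : Fin k, i' < i → v i' = w i') ∧ v i < w i

/-- A word of length `k` is Lyndon if it is strictly lexicographically smaller than all
of its proper cyclic rotations. -/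
def isLyndon {k : ℕ} (w : Fin k → Bool) : Prop :=
  ∀ j : ℕ, 1 ≤ j → j ≤ k - 1 → lexLt w (rot j w)

/-! Every word of `B_{m,n}` is primitive: if it were the `r`-th power of a block of length `d`
with `r > 1`, then `r ∣ n` would force its weight to be `≡ -1 (mod r)`, while summing block by
block gives a weight `≡ 0 (mod r)` because `m(m+1)` is even. Rotation preserves the balance and,
as `n ∣ mn`, the weight modulo `n`. Hence every rotation class of such words contains exactly one
Lyndon word, its lexicographically least rotation, and the words of `B_{m,n}` in the class of a
Lyndon word `w` are the `n` rotations of `w` that start at one of its zeros. -/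

open Finset Function

section Shift

open Fin.NatCast

def shift {α : Type*} {k : ℕ} (a : Fin k) (w : Fin k → α) : Fin k → α := fun i => w (i + a)

variable {α : Type*} {k : ℕ} [NeZero k]

theorem shift_shift (a b : Fin k) (w : Fin k → α) : shift a (shift b w) = shift (a + b) w := by
  funext i
  simp only [shift, add_assoc]

theorem shift_zero (w : Fin k → α) : shift 0 w = w := by
  funext i
  simp only [shift, add_zero]

theorem shift_neg_shift (a : Fin k) (w : Fin k → α) : shift (-a) (shift a w) = w := by
  rw [shift_shift, neg_add_cancel, shift_zero]

theorem rot_eq_shift (j : ℕ) (w : Fin k → Bool) : rot j w = shift (j : Fin k) w := by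
  funext i
  simp only [rot, shift]
  congr 1
  ext
  simp [Fin.val_add]

end Shift

section Lyndon

open Fin.NatCast

variable {k : ℕ} [NeZero k] {w : Fin k → Bool}

theorem isLyndon_iff : isLyndon w ↔ ∀ a : Fin k, a ≠ 0 → toLex w < toLex (shift a w) := by
  constructor
  · intro hw a ha
    have ha' : 0 < (a : ℕ) := Fin.pos_iff_ne_zero.mpr ha
    have h := hw a ha' (by omega)
    rwa [rot_eq_shift, Fin.cast_val_eq_self] at h
  · intro hw j hj hjk
    rw [rot_eq_shift]
    refine hw j fun h => ?_
    rw [Fin.natCast_eq_zero] at h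
    exact absurd (Nat.le_of_dvd hj h) (by omega)

theorem eq_zero_of_isLyndon_shift {a : Fin k} (hw : isLyndon w) (ha : isLyndon (shift a w)) :
    a = 0 := by
  by_contra h
  have h₁ := isLyndon_iff.mp hw a h
  have h₂ := isLyndon_iff.mp ha (-a) (neg_ne_zero.mpr h)
  rw [shift_neg_shift] at h₂
  exact lt_asymm h₁ h₂

theorem exists_isLyndon_shift (hw : ∀ a, shift a w = w → a = 0) :
    ∃ a, isLyndon (shift a w) := by
  obtain ⟨a, ha⟩ := Finite.exists_min fun a : Fin k => toLex (shift a w)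
  refine ⟨a, isLyndon_iff.mpr fun b hb => ?_⟩
  rw [shift_shift]
  refine (ha (b + a)).lt_of_ne fun h => hb (hw b ?_)
  have h' : shift a (shift b w) = shift a w := by rw [shift_shift, add_comm, ← toLex_inj.mp h]
  simpa only [shift_neg_shift] using congrArg (shift (-a)) h'

theorem isLyndon.apply_zero_eq_false (hw : isLyndon w) {i : Fin k} (hi : w i = false) :
    w 0 = false := by
  by_contra h0
  have hi0 : i ≠ 0 := by rintro rfl; exact h0 hi
  refine lt_asymm (isLyndon_iff.mp hw i hi0) ⟨0, fun j hj => (Fin.not_lt_zero j hj).elim, ?_⟩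
  simp_all [shift]

end Lyndon

section Weight

theorem natCast_val_add_of_dvd {n k : ℕ} (hnk : n ∣ k) (i j : Fin k) :
    (((i + j : Fin k) : ℕ) : ZMod n) = (i : ZMod n) + (j : ZMod n) := by
  rw [Fin.val_add, ← Nat.cast_add, ZMod.natCast_eq_natCast_iff]
  exact (Nat.mod_modEq _ k).of_dvd hnk

def weight {k : ℕ} (w : Fin k → Bool) : ℕ := ∑ i, if w i = true then (i : ℕ) + 1 else 0

variable {k : ℕ} [NeZero k]

theorem card_filter_shift {α : Type*} [DecidableEq α] (a : Fin k) (w : Fin k → α) (b : α) :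
    #{i | shift a w i = b} = #{i | w i = b} := by
  simp only [card_filter]
  exact Equiv.sum_comp (Equiv.addRight a) fun i => if w i = b then 1 else 0

theorem weight_shift {n : ℕ} (hnk : n ∣ k) (a : Fin k) (w : Fin k → Bool) :
    (weight (shift a w) : ZMod n) + (a : ZMod n) * #{i | w i = true} = weight w := by
  rw [← card_filter_shift a w true, card_filter]
  have h := Equiv.sum_comp (Equiv.addRight a) fun i =>
    if w i = true then ((i : ℕ) : ZMod n) + 1 else 0
  simp only [weight, Nat.cast_sum, Nat.cast_ite, Nat.cast_add, Nat.cast_one, Nat.cast_zero, ← h,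
    Equiv.coe_addRight, natCast_val_add_of_dvd hnk, mul_sum, ← sum_add_distrib]
  refine sum_congr rfl fun i _ => ?_
  by_cases hi : w (i + a) = true <;> simp [shift, hi]
  ring

end Weight

section Balanced

variable {m n : ℕ}

def memC (m n : ℕ) (w : Fin ((m + 1) * n) → Bool) : Prop :=
  #{i | w i = true} = m * n ∧ #{i | w i = false} = n ∧ (weight w : ZMod n) = -1

theorem memB_iff [NeZero ((m + 1) * n)] {w : Fin ((m + 1) * n) → Bool} :
    memB m n w ↔ memC m n w ∧ w 0 = false := by
  have h0 : (∀ i : Fin ((m + 1) * n), (i : ℕ) = 0 → w i = false) ↔ w 0 = false :=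
    ⟨fun h => h 0 rfl, fun h i hi => (Fin.ext hi : i = 0) ▸ h⟩
  simp only [memB, memC, weight, h0]
  tauto

theorem memC_shift [NeZero ((m + 1) * n)] {w : Fin ((m + 1) * n) → Bool} (hw : memC m n w)
    (a : Fin ((m + 1) * n)) : memC m n (shift a w) := by
  obtain ⟨h1, h0, hwt⟩ := hw
  refine ⟨(card_filter_shift a w true).trans h1, (card_filter_shift a w false).trans h0, ?_⟩
  have h := weight_shift (dvd_mul_left n (m + 1)) a w
  rwa [h1, Nat.cast_mul, ZMod.natCast_self, mul_zero, mul_zero, add_zero, hwt] at h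

theorem memB_shift [NeZero ((m + 1) * n)] {w : Fin ((m + 1) * n) → Bool} (hw : memB m n w)
    {a : Fin ((m + 1) * n)} (ha : w a = false) : memB m n (shift a w) := by
  rw [memB_iff] at hw ⊢
  exact ⟨memC_shift hw.1 a, by simpa [shift] using ha⟩

end Balanced

section Periodic

theorem Function.Periodic.nat_gcd {α : Type*} {f : ℕ → α} {a b : ℕ} (ha : Periodic f a)
    (hb : Periodic f b) : Periodic f (a.gcd b) := by
  induction a, b using Nat.gcd.induction with
  | H0 b => simpa using hb
  | H1 a b _ ih =>
    rw [Nat.gcd_rec]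
    refine ih (fun x => ?_) ha
    have h := ha.nat_mul (b / a) (x + b % a)
    rw [Nat.cast_id, add_assoc, Nat.mod_add_div'] at h
    rw [← h, hb]

theorem Function.Periodic.sum_range_mul {α M : Type*} [AddCommMonoid M] {f : ℕ → α} {d : ℕ}
    (hf : Periodic f d) (G : α → ℕ → M) (r : ℕ) :
    ∑ x ∈ range (r * d), G (f x) x =
      ∑ t ∈ range r, ∑ s ∈ range d, G (f s) (d * t + s) := by
  induction r with
  | zero => simp
  | succ r ih =>
    rw [Nat.succ_mul, sum_range_add, ih, sum_range_succ]
    congr 1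
    refine sum_congr rfl fun s _ => ?_
    have h := hf.nat_mul r s
    rw [Nat.cast_id] at h
    rw [add_comm (r * d), h, mul_comm d, add_comm]

open Fin.NatCast in
theorem sum_fin_eq_sum_blocks {α M : Type*} [AddCommMonoid M] {N r d : ℕ} [NeZero N]
    {w : Fin N → α} (hN : N = r * d) (hw : Periodic (fun x : ℕ => w x) d)
    (G : α → ℕ → M) :
    ∑ i, G (w i) i = ∑ t ∈ range r, ∑ s ∈ range d, G (w s) (d * t + s) := by
  rw [← hw.sum_range_mul, ← hN, ← Fin.sum_univ_eq_sum_range (fun x => G (w x) x)]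
  simp only [Fin.cast_val_eq_self]

open Fin.NatCast in
theorem weight_eq_sum_blocks {N r d : ℕ} [NeZero N] {w : Fin N → Bool} (hN : N = r * d)
    (hw : Periodic (fun x : ℕ => w x) d) :
    weight w = r * (∑ s ∈ range d, if w s = true then s + 1 else 0) +
      d * (∑ s ∈ range d, if w s = true then 1 else 0) * ∑ t ∈ range r, t := by
  have hblock (t : ℕ) : ∑ s ∈ range d, (if w s = true then d * t + s + 1 else 0) =
      (∑ s ∈ range d, if w s = true then s + 1 else 0) +
        d * t * ∑ s ∈ range d, if w s = true then 1 else 0 := by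
    simp only [mul_sum, ← sum_add_distrib]
    refine sum_congr rfl fun s _ => ?_
    split_ifs <;> ring
  rw [weight, sum_fin_eq_sum_blocks hN hw fun b x => if b = true then x + 1 else 0]
  simp only [hblock, sum_add_distrib, sum_const, card_range, smul_eq_mul, ← sum_mul]
  rw [← mul_sum]
  ring

end Periodic

section Aperiodic

open Fin.NatCast

variable {m n : ℕ} [NeZero ((m + 1) * n)] {w : Fin ((m + 1) * n) → Bool}

theorem memC.eq_one_of_periodic (hw : memC m n w) {r d : ℕ} (hN : (m + 1) * n = r * d)
    (hv : Periodic (fun x : ℕ => w x) d) : r = 1 := by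
  obtain ⟨h1, h0, hwt⟩ := hw
  have hsum := sum_fin_eq_sum_blocks (M := ℕ) hN hv
  set z := ∑ s ∈ range d, if w s = false then 1 else 0
  set o := ∑ s ∈ range d, if w s = true then 1 else 0
  set W₀ := ∑ s ∈ range d, if w s = true then s + 1 else 0
  have hz : n = r * z := by
    rw [← h0, card_filter, hsum fun b _ => if b = false then 1 else 0]
    simp [z]
  have ho : m * n = r * o := by
    rw [← h1, card_filter, hsum fun b _ => if b = true then 1 else 0]
    simp [o]
  have hW : weight w = r * W₀ + d * o * ∑ t ∈ range r, t := weight_eq_sum_blocks hN hv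
  have hr : 0 < r := Nat.pos_of_ne_zero fun h => NeZero.ne ((m + 1) * n) (by rw [hN, h, zero_mul])
  have hd : d = (m + 1) * z := Nat.eq_of_mul_eq_mul_left hr (by rw [← hN, hz]; ring)
  have ho' : o = m * z := Nat.eq_of_mul_eq_mul_left hr (by rw [← ho, hz]; ring)
  obtain ⟨c, hc⟩ := Nat.even_mul_succ_self m
  have hc' := congrArg (Nat.cast : ℕ → ZMod r) hc
  have hS := congrArg (Nat.cast : ℕ → ZMod r) (sum_range_id_mul_two r)
  push_cast at hc' hS
  -- `m(m+1) = 2c` makes the offset term `d * o * (r(r-1)/2)` a multiple of `r`.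
  have hW0 : (weight w : ZMod r) = 0 := by
    rw [hW, hd, ho']
    push_cast
    linear_combination (z * z * ∑ t ∈ range r, (t : ZMod r)) * hc' + (c * z * z) * hS +
      (W₀ + c * z * z * ((r - 1 : ℕ) : ZMod r)) * ZMod.natCast_self r
  have hW1 : (weight w : ZMod r) = -1 := by
    have h := congrArg (ZMod.castHom (Dvd.intro z hz.symm) (ZMod r)) hwt
    rwa [map_natCast, map_neg, map_one] at h
  rw [← ZMod.one_eq_zero_iff, ← neg_eq_zero, ← hW1, hW0]

theorem memC.eq_zero_of_shift_eq_self (hw : memC m n w) {a : Fin ((m + 1) * n)}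
    (h : shift a w = w) : a = 0 := by
  have hvN : Periodic (fun x : ℕ => w x) ((m + 1) * n) := fun x => by simp
  have hva : Periodic (fun x : ℕ => w x) a := fun x => by
    simpa only [shift, Nat.cast_add, Fin.cast_val_eq_self] using congrFun h x
  obtain ⟨r, hr⟩ := Nat.gcd_dvd_right a ((m + 1) * n)
  rw [hw.eq_one_of_periodic (hr.trans (mul_comm _ _)) (hva.nat_gcd hvN), mul_one] at hr
  exact Fin.ext (Nat.eq_zero_of_dvd_of_lt ((dvd_of_eq hr).trans (Nat.gcd_dvd_left _ _)) a.isLt)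

end Aperiodic

section Counting

variable {m n : ℕ}

theorem memB.card_zeros {w : Fin ((m + 1) * n) → Bool} (hw : memB m n w) :
    Nat.card {a // w a = false} = n := by
  rw [Nat.card_eq_fintype_card, Fintype.card_subtype]
  exact hw.2.1

variable [NeZero ((m + 1) * n)]

def shiftLyndon
    (p : Σ w : {w : Fin ((m + 1) * n) → Bool // memB m n w ∧ isLyndon w},
      {a // w.1 a = false}) :
    {v : Fin ((m + 1) * n) → Bool // memB m n v} :=
  ⟨shift p.2 p.1.1, memB_shift p.1.2.1 p.2.2⟩

theorem shiftLyndon_injective : Function.Injective (shiftLyndon (m := m) (n := n)) := by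
  rintro ⟨⟨w, _, hwL⟩, a, _⟩ ⟨⟨w', _, hwL'⟩, a', _⟩ h
  have h' : shift a w = shift a' w' := congrArg Subtype.val h
  have hw' : w' = shift (-a' + a) w := by rw [← shift_shift, h', shift_neg_shift]
  have ha : -a' + a = 0 := eq_zero_of_isLyndon_shift hwL (hw' ▸ hwL')
  obtain rfl : a' = a := neg_add_eq_zero.mp ha
  rw [ha, shift_zero] at hw'
  subst hw'
  rfl

theorem shiftLyndon_surjective : Function.Surjective (shiftLyndon (m := m) (n := n)) := by
  rintro ⟨v, hv⟩
  obtain ⟨hvC, hv0⟩ := memB_iff.mp hv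
  obtain ⟨b, hb⟩ := exists_isLyndon_shift fun _ h => hvC.eq_zero_of_shift_eq_self h
  have hb0 : shift b v (-b) = false := by simpa [shift] using hv0
  have hvb : v b = false := by simpa [shift] using hb.apply_zero_eq_false hb0
  exact ⟨⟨⟨shift b v, memB_shift hv hvb, hb⟩, -b, hb0⟩,
    Subtype.ext (shift_neg_shift b v)⟩

end Counting

theorem n_mul_card_lyndon_general (m n : ℕ) (hn : 0 < n) :
    n * Nat.card {w : Fin ((m + 1) * n) → Bool // memB m n w ∧ isLyndon w} =
      Nat.card {w : Fin ((m + 1) * n) → Bool // memB m n w} := by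
  classical
  have : NeZero ((m + 1) * n) := ⟨by positivity⟩
  rw [← Nat.card_congr (Equiv.ofBijective _ ⟨shiftLyndon_injective, shiftLyndon_surjective⟩),
    Nat.card_sigma, sum_congr rfl fun w _ => w.2.1.card_zeros, sum_const, card_univ, smul_eq_mul,
    mul_comm, Nat.card_eq_fintype_card]

/-- `n · |B^L_{m,n}| = |B_{m,n}|`, where `B^L_{m,n}` is the set of Lyndon words
in `B_{m,n}`. -/
theorem n_mul_card_lyndon (m n : ℕ) (hm : 0 < m) (hn : 0 < n) :
    n * Nat.card {w : Fin ((m + 1) * n) → Bool // memB m n w ∧ isLyndon w} =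
      Nat.card {w : Fin ((m + 1) * n) → Bool // memB m n w} :=
  n_mul_card_lyndon_general m n hn
end
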